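/- arXiv:1808.09786 — 2 statements merged into one kernel-verified Lean document; each statement's English description precedes it below -/
import Mathlib

section
/- In VP_n (n ≥ 3), with a_{k,l} the cablings of λ_{1,2}, the following identities hold: a_{n-1,1} = λ_{1n}λ_{2n}⋯λ_{n-1,n}; a_{n-k,k} = λ_{1n}λ_{2n}⋯λ_{n-k,n} · a_{n-k,k-1} for 1 < k < n; and a_{1,n-1} = λ_{1n} · a_{1,n-2} (where a_{n-k,k-1} ∈ VP_{n-1} is included in VP_n by adding a trivial strand at the end). -/
/-- Index predicate for the generators `λ_{i j}` of the virtual pure braid group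
`VP n`: `1 ≤ i, j ≤ n` and `i ≠ j` (1-based indices). -/
def VPIdx (n : ℕ) (p : ℕ × ℕ) : Prop :=
  1 ≤ p.1 ∧ p.1 ≤ n ∧ 1 ≤ p.2 ∧ p.2 ≤ n ∧ p.1 ≠ p.2

instance (n : ℕ) (p : ℕ × ℕ) : Decidable (VPIdx n p) := by
  unfold VPIdx; infer_instance

/-- Generators `λ_{i j}`, `1 ≤ i ≠ j ≤ n`. -/
def VPGen (n : ℕ) := {p : ℕ × ℕ // VPIdx n p}

/-- The generator `λ_{i j}` as an element of the free group (junk value `1` out of range). -/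
def lamW {n : ℕ} (i j : ℕ) : FreeGroup (VPGen n) :=
  if h : VPIdx n (i, j) then FreeGroup.of ⟨(i, j), h⟩ else 1

/-- The defining relations of the virtual pure braid group `VP n`:
`λ_{ij}λ_{kl} = λ_{kl}λ_{ij}` and `λ_{ki}λ_{kj}λ_{ij} = λ_{ij}λ_{kj}λ_{ki}`
(distinct letters denote distinct indices). -/
def VPRels (n : ℕ) : Set (FreeGroup (VPGen n)) :=
  {w | ∃ i j k l : ℕ, VPIdx n (i, j) ∧ VPIdx n (k, l) ∧ i ≠ k ∧ i ≠ l ∧ j ≠ k ∧ j ≠ l ∧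
      w = lamW i j * lamW k l * (lamW k l * lamW i j)⁻¹} ∪
  {w | ∃ i j k : ℕ, VPIdx n (i, j) ∧ VPIdx n (k, i) ∧ VPIdx n (k, j) ∧
      w = lamW k i * lamW k j * lamW i j * (lamW i j * lamW k j * lamW k i)⁻¹}

/-- The virtual pure braid group on `n` strands. -/
abbrev VP (n : ℕ) := PresentedGroup (VPRels n)

/-- The generator `λ_{i j}` of `VP n` (junk value `1` out of range). -/
def lam' {n : ℕ} (i j : ℕ) : VP n :=
  if h : VPIdx n (i, j) then PresentedGroup.of ⟨(i, j), h⟩ else 1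

/-- The product `λ_{1 l} λ_{2 l} ⋯ λ_{k-1, l}`. -/
def conjA {n : ℕ} (k l : ℕ) : VP n :=
  ((List.range (k - 1)).map fun j => lam' (j + 1) l).prod

/-- The product `λ_{l 1}⁻¹ λ_{l 2}⁻¹ ⋯ λ_{l, k-1}⁻¹`. -/
def conjB {n : ℕ} (k l : ℕ) : VP n :=
  ((List.range (k - 1)).map fun j => (lam' l (j + 1))⁻¹).prod

/-- `s` is the family of degeneracy (strand-doubling) homomorphisms
`s_i : VP m → VP (m+1)` (`0 ≤ i ≤ m-1`), acting on the generators by the explicit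
cabling formulas of Proposition 3.1 of Bardakov–Mikhailov–Wu. -/
def IsCabling (s : ∀ m : ℕ, ℕ → (VP m →* VP (m + 1))) : Prop :=
  ∀ m k l i : ℕ, 1 ≤ k → k < l → l ≤ m → i < m →
    (s m i (lam' k l) =
      if i + 1 < k then lam' (k + 1) (l + 1)
      else if i + 1 = k then lam' k (l + 1) * lam' (k + 1) (l + 1)
      else if i + 1 < l then lam' k (l + 1)
      else if i + 1 = l then (conjA k l)⁻¹ * lam' k (l + 1) * conjA k l * lam' k l
      else lam' k l) ∧
    (s m i (lam' l k) =
      if i + 1 < k then lam' (l + 1) (k + 1)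
      else if i + 1 = k then lam' (l + 1) (k + 1) * lam' (l + 1) k
      else if i + 1 < l then lam' (l + 1) k
      else if i + 1 = l then lam' l k * ((conjB k l)⁻¹ * lam' (l + 1) k * conjB k l)
      else lam' l k)

/-- `d` is the family of face (strand-deleting) homomorphisms
`d_i : VP (m+1) → VP m` (`0 ≤ i ≤ m`), acting on the generators by the formulas
of Proposition 3.1 of Bardakov–Mikhailov–Wu. -/
def IsFace (d : ∀ m : ℕ, ℕ → (VP (m + 1) →* VP m)) : Prop :=
  ∀ m k l i : ℕ, 1 ≤ k → k < l → l ≤ m + 1 → i ≤ m →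
    (d m i (lam' k l) =
      if i + 1 < k then lam' (k - 1) (l - 1)
      else if i + 1 = k then 1
      else if i + 1 < l then lam' k (l - 1)
      else if i + 1 = l then 1
      else lam' k l) ∧
    (d m i (lam' l k) =
      if i + 1 < k then lam' (l - 1) (k - 1)
      else if i + 1 = k then 1
      else if i + 1 < l then lam' (l - 1) k
      else if i + 1 = l then 1
      else lam' l k)

/-- `ι` is the family of trivial-strand inclusions `VP m → VP (m+1)`, `λ_{ij} ↦ λ_{ij}`. -/
def IsIncl (ι : ∀ m : ℕ, VP m →* VP (m + 1)) : Prop :=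
  ∀ m i j : ℕ, VPIdx m (i, j) → ι m (lam' i j) = lam' i j

/-- Iterated trivial-strand inclusion `VP p → VP (p + q)`. -/
def iotaIter (ι : ∀ m : ℕ, VP m →* VP (m + 1)) (p : ℕ) : (q : ℕ) → (VP p →* VP (p + q))
  | 0 => MonoidHom.id (VP p)
  | q + 1 => (ι (p + q)).comp (iotaIter ι p q)

/-- The composite `s_{m} s_{m-1} ⋯ s_{skip+1} ŝ_{skip} s_{skip-1} ⋯ s_0 : VP 2 → VP (m+2)`
of `m` degeneracies with the index `skip` omitted. -/
def chain (s : ∀ m : ℕ, ℕ → (VP m →* VP (m + 1))) (skip : ℕ) :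
    (m : ℕ) → (VP 2 →* VP (m + 2))
  | 0 => MonoidHom.id (VP 2)
  | m + 1 => (s (m + 2) (if skip ≤ m then m + 1 else m)).comp (chain s skip m)

/-- The cabled element `a_{k, n+2-k} = s_{n+1-1}⋯s_k ŝ_{k-1} s_{k-2}⋯s_0(λ_{1,2}) ∈ VP (n+2)`. -/
def aa (s : ∀ m : ℕ, ℕ → (VP m →* VP (m + 1))) (n k : ℕ) : VP (n + 2) :=
  chain s (k - 1) n (lam' 1 2)

/-- The cabled element `b_{k, n+2-k} = s_{n+1-1}⋯s_k ŝ_{k-1} s_{k-2}⋯s_0(λ_{2,1}) ∈ VP (n+2)`. -/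
def bb (s : ∀ m : ℕ, ℕ → (VP m →* VP (m + 1))) (n k : ℕ) : VP (n + 2) :=
  chain s (k - 1) n (lam' 2 1)

/-- The simplicial subgroups `T_m ≤ VP (m+1)`:
`T_0 = 1`, `T_1 = VP 2`, `T_{m+2} = ⟨s_0(T_{m+1}), …, s_{m+1}(T_{m+1})⟩`. -/
def TT (s : ∀ m : ℕ, ℕ → (VP m →* VP (m + 1))) : (m : ℕ) → Subgroup (VP (m + 1))
  | 0 => ⊥
  | 1 => ⊤
  | m + 2 => ⨆ i ∈ Finset.range (m + 2), Subgroup.map (s (m + 2) i) (TT s (m + 1))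

/-!
Write `B_c = λ_{1c} λ_{2c} ⋯ λ_{tc}`. The cabling `a_{t, n+2-t}` has the closed form
`B_{n+2} B_{n+1} ⋯ B_{t+1}`. Induction on `n`: the last degeneracy `s_{n+1}` doubles the last
strand, so it fixes `B_c` for `c ≤ n + 1` and sends `B_{n+2}` to `B_{n+3} B_{n+2}`, because the
conjugating factors in its formula for `λ_{k,n+2}` telescope. Comparing the closed forms in `VP n`
and `VP (n-1)` gives the recursion: they differ exactly by the first block `B_n`.
-/

def colProd {n : ℕ} (t c : ℕ) : VP n :=
  ((List.range t).map fun j => lam' (j + 1) c).prod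

def colWord {n : ℕ} (t : ℕ) : ℕ → VP n
  | 0 => 1
  | N + 1 => colProd t (t + N + 1) * colWord t N

theorem colProd_succ {n : ℕ} (t c : ℕ) :
    (colProd (t + 1) c : VP n) = colProd t c * lam' (t + 1) c := by
  simp [colProd, List.range_succ]

theorem colProd_one {n : ℕ} (c : ℕ) : (colProd 1 c : VP n) = lam' 1 c := by
  simp [colProd]

theorem colWord_succ {n : ℕ} (t N : ℕ) :
    (colWord t (N + 1) : VP n) = colProd t (t + N + 1) * colWord t N := rfl

theorem map_colProd {n n' : ℕ} (f : VP n →* VP n') {t c c' : ℕ}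
    (h : ∀ j < t, f (lam' (j + 1) c) = lam' (j + 1) c') : f (colProd t c) = colProd t c' := by
  simp only [colProd, map_list_prod, List.map_map]
  congr 1
  exact List.map_congr_left fun j hj => h j (List.mem_range.mp hj)

theorem map_colWord {n n' : ℕ} (f : VP n →* VP n') {t N : ℕ}
    (h : ∀ c, t < c → c ≤ t + N → f (colProd t c) = colProd t c) :
    f (colWord t N) = colWord t N := by
  induction N with
  | zero => exact map_one f
  | succ N ih =>
    rw [colWord_succ, colWord_succ, map_mul, h _ (by omega) (by omega),
      ih fun c h₁ h₂ => h c h₁ (by omega)]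

theorem IsIncl.apply_colWord {ι : ∀ m : ℕ, VP m →* VP (m + 1)} (hι : IsIncl ι) {m t N : ℕ}
    (h : t + N ≤ m) : ι m (colWord t N) = colWord t N :=
  map_colWord _ fun _ _ hc => map_colProd _ fun j _ => hι m (j + 1) _ (by unfold VPIdx; omega)

theorem aa_succ_of_le (s : ∀ m : ℕ, ℕ → (VP m →* VP (m + 1))) {n t : ℕ} (h : t ≤ n + 1) :
    aa s (n + 1) t = s (n + 2) (n + 1) (aa s n t) := by
  simp only [aa, chain, if_pos (show t - 1 ≤ n by omega), MonoidHom.comp_apply]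

namespace IsCabling

variable {s : ∀ m : ℕ, ℕ → (VP m →* VP (m + 1))}

theorem apply_lam_of_le (hs : IsCabling s) {m i k c : ℕ} (hk : 1 ≤ k) (hkc : k < c)
    (hci : c ≤ i) (hi : i < m) : s m i (lam' k c) = lam' k c := by
  rw [(hs m k c i hk hkc (by omega) hi).1, if_neg (by omega), if_neg (by omega),
    if_neg (by omega), if_neg (by omega)]

theorem apply_lam_of_lt (hs : IsCabling s) {m i k c : ℕ} (hk : 1 ≤ k) (hki : k ≤ i)
    (hic : i + 1 < c) (hc : c ≤ m) : s m i (lam' k c) = lam' k (c + 1) := by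
  rw [(hs m k c i hk (by omega) hc (by omega)).1, if_neg (by omega), if_neg (by omega),
    if_pos hic]

theorem apply_lam_succ_left (hs : IsCabling s) {m i c : ℕ} (hic : i + 1 < c) (hc : c ≤ m) :
    s m i (lam' (i + 1) c) = lam' (i + 1) (c + 1) * lam' (i + 2) (c + 1) := by
  rw [(hs m (i + 1) c i (by omega) hic hc (by omega)).1, if_neg (by omega), if_pos rfl]

theorem apply_lam_succ_right (hs : IsCabling s) {m i j : ℕ} (hji : j < i) (hi : i < m) :
    s m i (lam' (j + 1) (i + 1)) =
      (colProd j (i + 1))⁻¹ * lam' (j + 1) (i + 2) * colProd j (i + 1) * lam' (j + 1) (i + 1) := by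
  rw [(hs m (j + 1) (i + 1) i (by omega) (by omega) hi hi).1, if_neg (by omega),
    if_neg (by omega), if_neg (by omega), if_pos rfl]
  rfl

theorem apply_colProd_of_le (hs : IsCabling s) {m i t c : ℕ} (htc : t < c) (hci : c ≤ i)
    (hi : i < m) : s m i (colProd t c) = colProd t c :=
  map_colProd _ fun _ _ => hs.apply_lam_of_le (by omega) (by omega) hci hi

theorem apply_colProd_of_lt (hs : IsCabling s) {m i t c : ℕ} (hti : t ≤ i) (hic : i + 1 < c)
    (hc : c ≤ m) : s m i (colProd t c) = colProd t (c + 1) :=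
  map_colProd _ fun _ _ => hs.apply_lam_of_lt (by omega) (by omega) hic hc

theorem apply_colProd_succ_right (hs : IsCabling s) {m i t : ℕ} (hti : t ≤ i) (hi : i < m) :
    s m i (colProd t (i + 1)) = colProd t (i + 2) * colProd t (i + 1) := by
  induction t with
  | zero => exact map_one _
  | succ t ih =>
    rw [colProd_succ, map_mul, ih (by omega), hs.apply_lam_succ_right (by omega) hi,
      colProd_succ, colProd_succ]
    group

theorem apply_colWord_of_le (hs : IsCabling s) {m i t N : ℕ} (h : t + N ≤ i) (hi : i < m) :
    s m i (colWord t N) = colWord t N :=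
  map_colWord _ fun _ htc hc => hs.apply_colProd_of_le htc (by omega) hi

theorem chain_of_le_skip (hs : IsCabling s) {skip n : ℕ} (h : n ≤ skip) :
    chain s skip n (lam' 1 2) = colProd (n + 1) (n + 2) := by
  induction n with
  | zero => exact (colProd_one (n := 2) 2).symm
  | succ n ih =>
    simp only [chain, if_neg (show ¬skip ≤ n by omega), MonoidHom.comp_apply]
    rw [ih (by omega), colProd_succ, map_mul, hs.apply_colProd_of_lt le_rfl (by omega) le_rfl,
      hs.apply_lam_succ_left (by omega) le_rfl, colProd_succ, colProd_succ, mul_assoc]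

theorem aa_eq_colWord (hs : IsCabling s) {j n : ℕ} (h : j ≤ n) :
    aa s n (j + 1) = colWord (j + 1) (n + 1 - j) := by
  induction n, h using Nat.le_induction with
  | base =>
    rw [Nat.add_sub_cancel_left, colWord_succ, colWord, mul_one]
    exact hs.chain_of_le_skip le_rfl
  | succ n hjn ih =>
    obtain ⟨N, hN⟩ : ∃ N, n + 1 - j = N + 1 := ⟨n - j, by omega⟩
    rw [aa_succ_of_le s (by omega), ih, hN, show n + 1 + 1 - j = N + 1 + 1 by omega,
      colWord_succ, colWord_succ, colWord_succ, map_mul,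
      hs.apply_colWord_of_le (by omega) (by omega),
      show j + 1 + N + 1 = n + 1 + 1 by omega, hs.apply_colProd_succ_right (by omega) (by omega),
      show j + 1 + (N + 1) + 1 = n + 1 + 2 by omega, mul_assoc]

theorem aa_succ (hs : IsCabling s) {ι : ∀ m : ℕ, VP m →* VP (m + 1)} (hι : IsIncl ι)
    {m j : ℕ} (h : j ≤ m) :
    aa s (m + 1) (j + 1) = colProd (j + 1) (m + 3) * ι (m + 2) (aa s m (j + 1)) := by
  rw [hs.aa_eq_colWord (by omega), hs.aa_eq_colWord h, hι.apply_colWord (by omega),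
    show m + 1 + 1 - j = m + 1 - j + 1 by omega, colWord_succ,
    show j + 1 + (m + 1 - j) + 1 = m + 3 by omega]

end IsCabling

/-- (Formula (3.1).) In `VP n` with `n = m + 3 ≥ 3`, writing
`a_{k,l}` for the cablings of `λ_{1,2}` (so `a_{k, n-k} = aa s (m+1) k ∈ VP n` and
`a_{k, n-1-k} = aa s m k ∈ VP (n-1)`, included in `VP n` via `ι`):
`a_{n-1,1} = λ_{1n}λ_{2n}⋯λ_{n-1,n}`;
`a_{n-k,k} = λ_{1n}λ_{2n}⋯λ_{n-k,n} · a_{n-k,k-1}` for `1 < k < n`; and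
`a_{1,n-1} = λ_{1n} · a_{1,n-2}`. -/
theorem aa_recursion (s : ∀ m : ℕ, ℕ → (VP m →* VP (m + 1)))
    (ι : ∀ m : ℕ, VP m →* VP (m + 1)) (hs : IsCabling s) (hι : IsIncl ι) (m : ℕ) :
    (aa s (m + 1) (m + 2) =
      ((List.range (m + 2)).map fun j => (lam' (j + 1) (m + 3) : VP (m + 3))).prod) ∧
    (∀ k : ℕ, 1 < k → k < m + 3 →
      aa s (m + 1) (m + 3 - k) =
        ((List.range (m + 3 - k)).map fun j => (lam' (j + 1) (m + 3) : VP (m + 3))).prod *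
          ι (m + 2) (aa s m (m + 3 - k))) ∧
    (aa s (m + 1) 1 = (lam' 1 (m + 3) : VP (m + 3)) * ι (m + 2) (aa s m 1)) := by
  refine ⟨hs.chain_of_le_skip le_rfl, fun k hk₁ hk₂ => ?_, ?_⟩
  · obtain ⟨j, hj⟩ : ∃ j, m + 3 - k = j + 1 := ⟨m + 2 - k, by omega⟩
    rw [hj]
    exact hs.aa_succ hι (by omega)
  · rw [← colProd_one]
    exact hs.aa_succ hι (Nat.zero_le m)
end

section
/- In VP_n (n ≥ 3), with b_{k,l} the cablings of λ_{2,1}, the following identities hold: b_{n-1,1} = λ_{n,n-1}λ_{n,n-2}⋯λ_{n,1}; b_{n-k,k} = b_{n-k,k-1} · λ_{n,n-k}λ_{n,n-k-1}⋯λ_{n,1} for 1 < k < n; and b_{1,n-1} = b_{1,n-2} · λ_{n,1} (where b_{n-k,k-1} ∈ VP_{n-1} is included in VP_n by adding a trivial strand at the end). -/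
/-!
The cabled element has the closed form
`b_{k, n-k} = ∏_{r = k+1}^{n} λ_{r,k} λ_{r,k-1} ⋯ λ_{r,1}` in `VP n`.
By induction on `n`: for `k ≤ n - 1`, `b_{k, n+1-k} = s_{n-1}(b_{k, n-k})`, and the top
degeneracy `s_{n-1}` fixes the rows `r < n` and splits the row `r = n` into the rows `n` and
`n + 1` (the conjugations in its cabling formula telescope along the row); the remaining
element is `b_{n,1} = s_{n-2}(b_{n-1,1})`, and `s_{n-2}` turns the single row `n` into the
single row `n + 1`. The recursion then splits off the last row.
-/

def lamRow (N r : ℕ) : ℕ → VP N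
  | 0 => 1
  | k + 1 => lam' r (k + 1) * lamRow N r k

def lamRows (N k : ℕ) : ℕ → VP N
  | 0 => 1
  | c + 1 => lamRows N k c * lamRow N (k + 1 + c) k

lemma lamRow_eq_prod (N r k : ℕ) :
    lamRow N r k = ((List.range k).map fun j => lam' r (k - j)).prod := by
  induction k with
  | zero => rfl
  | succ k ih =>
    rw [List.range_succ_eq_map, List.map_cons, List.prod_cons, List.map_map, lamRow, ih]
    simp [Function.comp_def]

lemma conjB_succ (N r k : ℕ) : (conjB (k + 1) r : VP N) = (lamRow N r k)⁻¹ := by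
  rw [conjB, Nat.add_sub_cancel]
  induction k with
  | zero => rfl
  | succ k ih => rw [List.range_succ, List.map_append, List.prod_append, ih, lamRow]; simp

lemma map_lamRow {N N' r r' k : ℕ} (f : VP N →* VP N')
    (hf : ∀ j, 1 ≤ j → j ≤ k → f (lam' r j) = lam' r' j) :
    f (lamRow N r k) = lamRow N' r' k := by
  induction k with
  | zero => exact map_one f
  | succ k ih =>
    rw [lamRow, lamRow, map_mul, hf (k + 1) (by omega) le_rfl,
      ih fun j hj hjk => hf j hj (by omega)]

lemma map_lamRows {N N' k c : ℕ} (f : VP N →* VP N')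
    (hf : ∀ r j, k < r → r ≤ k + c → 1 ≤ j → j ≤ k → f (lam' r j) = lam' r j) :
    f (lamRows N k c) = lamRows N' k c := by
  induction c with
  | zero => exact map_one f
  | succ c ih =>
    rw [lamRows, lamRows, map_mul, ih fun r j h1 h2 => hf r j h1 (by omega),
      map_lamRow f fun j h1 h2 => hf _ j (by omega) (by omega) h1 h2]

namespace IsCabling

variable {s : ∀ m : ℕ, ℕ → (VP m →* VP (m + 1))}

lemma apply_lam_of_le_s9 (hs : IsCabling s) {m i r j : ℕ} (hj : 1 ≤ j) (hjr : j < r)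
    (hri : r ≤ i) (him : i < m) : s m i (lam' r j) = lam' r j := by
  rw [(hs m j r i hj hjr (by omega) him).2, if_neg (by omega), if_neg (by omega),
    if_neg (by omega), if_neg (by omega)]

lemma apply_lam_of_le_of_lt (hs : IsCabling s) {m i r j : ℕ} (hj : 1 ≤ j) (hji : j ≤ i)
    (hir : i + 1 < r) (hrm : r ≤ m) : s m i (lam' r j) = lam' (r + 1) j := by
  rw [(hs m j r i hj (by omega) hrm (by omega)).2, if_neg (by omega), if_neg (by omega),
    if_pos hir]

lemma apply_lam_diag (hs : IsCabling s) {m i r : ℕ} (hir : i + 1 < r) (hrm : r ≤ m) :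
    s m i (lam' r (i + 1)) = lam' (r + 1) (i + 2) * lam' (r + 1) (i + 1) := by
  rw [(hs m (i + 1) r i (by omega) hir hrm (by omega)).2, if_neg (by omega), if_pos rfl]

lemma apply_lam_top (hs : IsCabling s) {m j : ℕ} (hj : 1 ≤ j) (hjm : j ≤ m) :
    s (m + 1) m (lam' (m + 1) j) =
      lam' (m + 1) j * (lamRow (m + 2) (m + 1) (j - 1) * lam' (m + 2) j *
        (lamRow (m + 2) (m + 1) (j - 1))⁻¹) := by
  obtain ⟨j, rfl⟩ : ∃ j', j = j' + 1 := ⟨j - 1, by omega⟩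
  rw [(hs (m + 1) (j + 1) (m + 1) m hj (by omega) le_rfl (by omega)).2, if_neg (by omega),
    if_neg (by omega), if_neg (by omega), if_pos rfl, conjB_succ, inv_inv, Nat.add_sub_cancel]

lemma apply_lamRow_top (hs : IsCabling s) {m k : ℕ} (hkm : k ≤ m) :
    s (m + 1) m (lamRow (m + 1) (m + 1) k) =
      lamRow (m + 2) (m + 1) k * lamRow (m + 2) (m + 2) k := by
  induction k with
  | zero => exact (map_one _).trans (mul_one 1).symm
  | succ k ih =>
    rw [lamRow, map_mul, ih (by omega), hs.apply_lam_top (by omega) hkm, Nat.add_sub_cancel,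
      lamRow, lamRow]
    group

lemma apply_lamRow_penultimate (hs : IsCabling s) (n : ℕ) :
    s (n + 2) n (lamRow (n + 2) (n + 2) (n + 1)) = lamRow (n + 3) (n + 3) (n + 2) := by
  rw [lamRow, map_mul, hs.apply_lam_diag (by omega) le_rfl,
    map_lamRow _ fun j hj hjn => hs.apply_lam_of_le_of_lt hj hjn (by omega) le_rfl,
    lamRow, lamRow, mul_assoc]

end IsCabling

section Chain

variable (s : ∀ m : ℕ, ℕ → (VP m →* VP (m + 1)))

lemma chain_congr_skip {m a b : ℕ} (ha : m ≤ a) (hb : m ≤ b) : chain s a m = chain s b m := by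
  induction m with
  | zero => rfl
  | succ m ih =>
    rw [chain, chain, if_neg (by omega), if_neg (by omega), ih (by omega) (by omega)]

lemma bb_succ_of_le {n k : ℕ} (hk : k ≤ n + 1) :
    bb s (n + 1) k = s (n + 2) (n + 1) (bb s n k) := by
  rw [bb, chain, if_pos (by omega)]
  rfl

lemma bb_succ_succ_self (n : ℕ) : bb s (n + 1) (n + 2) = s (n + 2) n (bb s n (n + 1)) := by
  rw [bb, chain, if_neg (by omega), bb,
    chain_congr_skip s (a := n + 2 - 1) (b := n + 1 - 1) (by omega) (by omega)]
  rfl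

variable {s}

lemma bb_succ_self (hs : IsCabling s) (n : ℕ) :
    bb s n (n + 1) = lamRow (n + 2) (n + 2) (n + 1) := by
  induction n with
  | zero => exact (mul_one _).symm
  | succ n ih => rw [bb_succ_succ_self, ih, hs.apply_lamRow_penultimate]

theorem bb_eq_lamRows (hs : IsCabling s) {n k : ℕ} (hk : 1 ≤ k) (hkn : k ≤ n + 1) :
    bb s n k = lamRows (n + 2) k (n + 2 - k) := by
  induction n with
  | zero =>
    obtain rfl : k = 1 := by omega
    exact (bb_succ_self hs 0).trans (one_mul _).symm
  | succ n ih =>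
    rcases (show k = n + 2 ∨ k ≤ n + 1 by omega) with rfl | hkn
    · rw [bb_succ_self hs, show n + 1 + 2 - (n + 2) = 1 by omega, lamRows, lamRows, one_mul]
    · obtain ⟨c, hc⟩ : ∃ c, n + 2 - k = c + 1 := ⟨n + 1 - k, by omega⟩
      have hkc : k + 1 + c = n + 2 := by omega
      rw [bb_succ_of_le s hkn, ih hkn, hc, lamRows, map_mul, hkc, hs.apply_lamRow_top (by omega),
        map_lamRows _ fun r j _ _ hj _ => hs.apply_lam_of_le_s9 hj (by omega) (by omega) (by omega),
        show n + 1 + 2 - k = c + 1 + 1 by omega, lamRows, lamRows, hkc,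
        show k + 1 + (c + 1) = n + 1 + 2 by omega, mul_assoc]

end Chain

theorem bb_succ_eq_iota_mul_lamRow {s : ∀ m : ℕ, ℕ → (VP m →* VP (m + 1))}
    {ι : ∀ m : ℕ, VP m →* VP (m + 1)} (hs : IsCabling s) (hι : IsIncl ι) {m k : ℕ}
    (hk : 1 ≤ k) (hkm : k ≤ m + 1) :
    bb s (m + 1) k = ι (m + 2) (bb s m k) * lamRow (m + 3) (m + 3) k := by
  rw [bb_eq_lamRows hs hk (by omega), bb_eq_lamRows hs hk hkm,
    map_lamRows (ι (m + 2)) fun r j _ _ hj _ =>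
      hι _ r j ⟨by omega, by omega, hj, by omega, by omega⟩,
    show m + 1 + 2 - k = m + 2 - k + 1 by omega, lamRows,
    show k + 1 + (m + 2 - k) = m + 3 by omega]

/-- (Formula (3.2).) In `VP n` with `n = m + 3 ≥ 3`, writing
`b_{k,l}` for the cablings of `λ_{2,1}` (so `b_{k, n-k} = bb s (m+1) k ∈ VP n` and
`b_{k, n-1-k} = bb s m k ∈ VP (n-1)`, included in `VP n` via `ι`):
`b_{n-1,1} = λ_{n,n-1}λ_{n,n-2}⋯λ_{n,1}`;
`b_{n-k,k} = b_{n-k,k-1} · λ_{n,n-k}λ_{n,n-k-1}⋯λ_{n,1}` for `1 < k < n`; and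
`b_{1,n-1} = b_{1,n-2} · λ_{n,1}`. -/
theorem bb_recursion (s : ∀ m : ℕ, ℕ → (VP m →* VP (m + 1)))
    (ι : ∀ m : ℕ, VP m →* VP (m + 1)) (hs : IsCabling s) (hι : IsIncl ι) (m : ℕ) :
    (bb s (m + 1) (m + 2) =
      ((List.range (m + 2)).map fun j => (lam' (m + 3) (m + 2 - j) : VP (m + 3))).prod) ∧
    (∀ k : ℕ, 1 < k → k < m + 3 →
      bb s (m + 1) (m + 3 - k) =
        ι (m + 2) (bb s m (m + 3 - k)) *
          ((List.range (m + 3 - k)).map fun j =>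
            (lam' (m + 3) (m + 3 - k - j) : VP (m + 3))).prod) ∧
    (bb s (m + 1) 1 = ι (m + 2) (bb s m 1) * (lam' (m + 3) 1 : VP (m + 3))) := by
  refine ⟨?_, fun k hk1 hk2 => ?_, ?_⟩
  · rw [bb_succ_self hs, lamRow_eq_prod]
  · rw [bb_succ_eq_iota_mul_lamRow hs hι (by omega) (by omega), lamRow_eq_prod]
  · rw [bb_succ_eq_iota_mul_lamRow hs hι le_rfl (by omega), lamRow, lamRow, mul_one]
end
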